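/- arXiv:math/0510175 — 6 statements merged into one kernel-verified Lean document; each statement's English description precedes it below -/
import Mathlib

section
/- Given a short exact sequence 0 → A → B → C → 0 of right R-modules, SG.dim B ≤ SG.dim A + SG.dim C. -/
/-- Goldie (uniform) dimension: supremum of the number of independent nonzero submodules. -/
noncomputable def goldieDim (R M : Type*) [Ring R] [AddCommGroup M] [Module R M] : ℕ∞ :=
  ⨆ (n : ℕ) (_ : ∃ f : Fin n → Submodule R M, (∀ i, f i ≠ ⊥) ∧ iSupIndep f), (n : ℕ∞)

/-- Strong Goldie dimension: supremum of Goldie dimensions of all quotients. -/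
noncomputable def sgoldieDim (R M : Type*) [Ring R] [AddCommGroup M] [Module R M] : ℕ∞ :=
  ⨆ K : Submodule R M, goldieDim R (M ⧸ K)

/-!
For `K ≤ B` let `N` be the image of `A` in `B ⧸ K`: it is a quotient of `A`, and `(B ⧸ K) ⧸ N` is
a quotient of `C`. So it suffices that Goldie dimension is subadditive,
`G.dim M ≤ G.dim P + G.dim (M ⧸ P)`. Given independent nonzero `U₁, …, Uₙ` in `M`, take a maximal
set `s` of indices such that `T = ⨁_{i ∈ s} Uᵢ` meets `P` trivially. The `Uᵢ` with `i ∈ s` stay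
independent and nonzero in `M ⧸ P`. For `j ∉ s`, maximality makes `(Uⱼ ⊕ T) ∩ P` nonzero, and these
submodules of `P` are independent: `P` embeds in `M ⧸ T` because `P ∩ T = 0`, and there they lie in
the independent images of the `Uⱼ`.
-/

section GoldieDim

variable {R M N : Type*} [Ring R] [AddCommGroup M] [Module R M] [AddCommGroup N] [Module R N]

theorem iSupIndep.comap_of_injective {ι : Type*} {φ : M →ₗ[R] N} (hφ : Function.Injective φ)
    {V : ι → Submodule R N} (hV : iSupIndep V) : iSupIndep fun i => (V i).comap φ := by
  intro i
  have hi : Disjoint ((V i).comap φ) ((⨆ (j) (_ : j ≠ i), V j).comap φ) := by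
    rw [disjoint_iff, ← Submodule.comap_inf, (hV i).eq_bot, Submodule.comap_bot,
      LinearMap.ker_eq_bot.2 hφ]
  exact hi.mono_right <|
    iSup₂_le fun j hj => Submodule.comap_mono (le_iSup₂ (f := fun j _ => V j) j hj)

theorem iSupIndep.map_mkQ {ι : Type*} {V : ι → Submodule R M} (hV : iSupIndep V)
    {T : Submodule R M} (hT : Disjoint (⨆ i, V i) T) : iSupIndep fun i => (V i).map T.mkQ := by
  intro i
  have hi : Disjoint (V i) ((⨆ (j) (_ : j ≠ i), V j) ⊔ T) :=
    (hV i).disjoint_sup_right_of_disjoint_sup_left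
      (hT.mono_left (sup_le (le_iSup V i) (iSup₂_le fun j _ => le_iSup V j)))
  simpa only [Submodule.map_iSup, Submodule.map_sup, Submodule.mkQ_map_self, sup_bot_eq] using
    Submodule.disjoint_map_of_ker_le_right (f := T.mkQ) hi (T.ker_mkQ.trans_le le_sup_right)

theorem card_le_goldieDim {ι : Type*} [Fintype ι] {V : ι → Submodule R M} (hV : iSupIndep V)
    (hV0 : ∀ i, V i ≠ ⊥) : (Fintype.card ι : ℕ∞) ≤ goldieDim R M :=
  le_iSup₂_of_le (Fintype.card ι)
    ⟨V ∘ (Fintype.equivFin ι).symm, fun _ => hV0 _, hV.comp (Fintype.equivFin ι).symm.injective⟩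
    le_rfl

theorem goldieDim_le_of_injective {φ : M →ₗ[R] N} (hφ : Function.Injective φ) :
    goldieDim R M ≤ goldieDim R N :=
  iSup₂_le fun n ⟨V, hV0, hV⟩ => by
    simpa only [Fintype.card_fin] using card_le_goldieDim (φ.iSupIndep_map hφ hV) fun i hi =>
      hV0 i (Submodule.map_injective_of_injective hφ (hi.trans (Submodule.map_bot φ).symm))

theorem goldieDim_le_sgoldieDim_of_surjective {ψ : M →ₗ[R] N} (hψ : Function.Surjective ψ) :
    goldieDim R N ≤ sgoldieDim R M :=
  (goldieDim_le_of_injective (ψ.quotKerEquivOfSurjective hψ).symm.injective).trans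
    (le_iSup (fun K => goldieDim R (M ⧸ K)) (LinearMap.ker ψ))

theorem goldieDim_le_sgoldieDim_of_ker_le {P : Type*} [AddCommGroup P] [Module R P]
    {g : M →ₗ[R] N} (hg : Function.Surjective g) {φ : M →ₗ[R] P} (hφ : Function.Surjective φ)
    (hk : LinearMap.ker g ≤ LinearMap.ker φ) : goldieDim R P ≤ sgoldieDim R N := by
  have hlift : Function.Surjective ((LinearMap.ker g).liftQ φ hk) :=
    .of_comp (g := (LinearMap.ker g).mkQ) (by rwa [← LinearMap.coe_comp, Submodule.liftQ_mkQ])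
  exact goldieDim_le_sgoldieDim_of_surjective
    (ψ := (LinearMap.ker g).liftQ φ hk ∘ₗ (g.quotKerEquivOfSurjective hg).symm.toLinearMap)
    (hlift.comp (g.quotKerEquivOfSurjective hg).symm.surjective)

theorem card_le_goldieDim_quotient {ι : Type*} [Fintype ι] {V : ι → Submodule R M}
    (hV : iSupIndep V) (hV0 : ∀ i, V i ≠ ⊥) {T : Submodule R M} (hT : Disjoint (⨆ i, V i) T) :
    (Fintype.card ι : ℕ∞) ≤ goldieDim R (M ⧸ T) := by
  refine card_le_goldieDim (hV.map_mkQ hT) fun i hi => hV0 i ?_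
  have hiT : V i ≤ T := by rw [← Submodule.ker_mkQ T, LinearMap.le_ker_iff_map, hi]
  exact (hT.mono_left (le_iSup V i)).eq_bot_of_le hiT

theorem card_le_goldieDim_of_not_disjoint {ι : Type*} [Fintype ι] {V : ι → Submodule R M}
    (hV : iSupIndep V) {T P : Submodule R M} (hVT : Disjoint (⨆ i, V i) T) (hTP : Disjoint T P)
    (hVP : ∀ i, ¬Disjoint (V i ⊔ T) P) : (Fintype.card ι : ℕ∞) ≤ goldieDim R P := by
  have hφ : Function.Injective (T.mkQ ∘ₗ P.subtype) := by
    rw [← LinearMap.ker_eq_bot, LinearMap.ker_comp, Submodule.ker_mkQ,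
      ← Submodule.disjoint_iff_comap_eq_bot]
    exact hTP.symm
  refine card_le_goldieDim ((hV.map_mkQ hVT).comap_of_injective hφ) fun i hi => hVP i ?_
  rw [Submodule.comap_comp, Submodule.comap_map_mkQ, ← Submodule.disjoint_iff_comap_eq_bot,
    sup_comm] at hi
  exact hi.symm

theorem goldieDim_le_add_goldieDim_quotient (P : Submodule R M) :
    goldieDim R M ≤ goldieDim R P + goldieDim R (M ⧸ P) := by
  classical
  refine iSup₂_le fun n ⟨U, hU0, hU⟩ => ?_
  obtain ⟨s, hs, hmax⟩ := Finset.exists_max_image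
    ({t | Disjoint (⨆ i ∈ t, U i) P} : Finset (Finset (Fin n))) Finset.card ⟨∅, by simp⟩
  set T := ⨆ i ∈ s, U i
  have hTP : Disjoint T P := (Finset.mem_filter.1 hs).2
  have hmaximal : ∀ j : ↥sᶜ, ¬Disjoint (U j ⊔ T) P := fun j hj => by
    have hj' := Finset.mem_compl.1 j.2
    have hcard := hmax (insert (j : Fin n) s) (Finset.mem_filter.2
      ⟨Finset.mem_univ _, by rwa [Finset.iSup_insert]⟩)
    rw [Finset.card_insert_of_notMem hj'] at hcard
    omega
  have hquot : (s.card : ℕ∞) ≤ goldieDim R (M ⧸ P) := by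
    simpa only [Fintype.card_coe] using card_le_goldieDim_quotient (V := fun i : s => U i)
      (hU.comp Subtype.val_injective) (fun i => hU0 i) (by rwa [iSup_subtype])
  have hVT : Disjoint (⨆ j : ↥sᶜ, U j) T := by
    rw [iSup_subtype]
    exact hU.disjoint_biSup_biSup (Finset.disjoint_coe.2 disjoint_compl_left)
  have hsub : (sᶜ.card : ℕ∞) ≤ goldieDim R P := by
    simpa only [Fintype.card_coe] using
      card_le_goldieDim_of_not_disjoint (hU.comp Subtype.val_injective) hVT hTP hmaximal
  have hcard : sᶜ.card + s.card = n := (Finset.card_compl_add_card s).trans (Fintype.card_fin n)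
  calc (n : ℕ∞) = (sᶜ.card : ℕ∞) + s.card := by exact_mod_cast hcard.symm
    _ ≤ goldieDim R P + goldieDim R (M ⧸ P) := add_le_add hsub hquot

end GoldieDim

theorem sgoldieDim_le_of_shortExact_general {R A B C : Type*} [Ring R]
    [AddCommGroup A] [Module R A] [AddCommGroup B] [Module R B] [AddCommGroup C] [Module R C]
    (f : A →ₗ[R] B) (g : B →ₗ[R] C) (hg : Function.Surjective g)
    (h : LinearMap.range f = LinearMap.ker g) :
    sgoldieDim R B ≤ sgoldieDim R A + sgoldieDim R C := by
  refine iSup_le fun K => ?_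
  set N := LinearMap.range (K.mkQ ∘ₗ f)
  have hker : LinearMap.ker g ≤ LinearMap.ker (N.mkQ ∘ₗ K.mkQ) := by
    rw [← h, LinearMap.range_le_ker_iff, LinearMap.comp_assoc]
    exact LinearMap.range_le_ker_iff.1 (Submodule.ker_mkQ N).ge
  calc goldieDim R (B ⧸ K) ≤ goldieDim R N + goldieDim R ((B ⧸ K) ⧸ N) :=
        goldieDim_le_add_goldieDim_quotient N
    _ ≤ sgoldieDim R A + sgoldieDim R C :=
        add_le_add (goldieDim_le_sgoldieDim_of_surjective (K.mkQ ∘ₗ f).surjective_rangeRestrict)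
          (goldieDim_le_sgoldieDim_of_ker_le hg (N.mkQ_surjective.comp K.mkQ_surjective) hker)

/-- For a short exact sequence 0 → A → B → C → 0, SG.dim B ≤ SG.dim A + SG.dim C. -/
theorem sgoldieDim_le_of_shortExact {R A B C : Type*} [Ring R]
    [AddCommGroup A] [Module R A] [AddCommGroup B] [Module R B] [AddCommGroup C] [Module R C]
    (f : A →ₗ[R] B) (g : B →ₗ[R] C) (hf : Function.Injective f) (hg : Function.Surjective g)
    (h : LinearMap.range f = LinearMap.ker g) :
    sgoldieDim R B ≤ sgoldieDim R A + sgoldieDim R C :=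
  sgoldieDim_le_of_shortExact_general f g hg h
end

section
/- If a ring R is right serial (R as a right module over itself is a finite direct sum of uniserial modules), then R is strongly right finite dimensional and SG.dim R_R = G.dim R_R. -/
/-- A module is uniserial if its submodules are linearly ordered by inclusion. -/
def IsUniserialModule (R M : Type*) [Ring R] [AddCommGroup M] [Module R M] : Prop :=
  ∀ A B : Submodule R M, A ≤ B ∨ B ≤ A

/-- A (nonzero) module is uniform if any two nonzero submodules intersect nontrivially,
i.e. every nonzero submodule is essential. -/
def IsUniformModule (R M : Type*) [Ring R] [AddCommGroup M] [Module R M] : Prop :=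
  Nontrivial M ∧ ∀ A B : Submodule R M, A ≠ ⊥ → B ≠ ⊥ → A ⊓ B ≠ ⊥

/-!
Everything happens in the modular lattice of submodules. If `u` is uniserial and `a` is nonzero
with `a ⊓ n = ⊥`, `a ≤ n ⊔ u`, then `n ⊔ a` is essential in `n ⊔ u`: the interval `[n, n ⊔ u]`
is a chain, so `n ⊔ a` and `n ⊔ x` are comparable for every `x ≤ n ⊔ u`. Hence, if a member `a`
of an independent family of `k` nonzero elements below `n ⊔ u` meets `n` trivially, projecting
along it, `x ↦ n ⊓ (x ⊔ a)`, leaves an independent family of at least `k - 1` nonzero elements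
below `n`; if no member does, intersecting with `n` keeps all `k`. By induction, a sum of `m` uniserial submodules has
Goldie dimension at most `m`; so does each of its quotients, a sum of `m` uniserial images.
For `R_R = U₁ ⊕ ⋯ ⊕ Uₘ` with all `Uᵢ ≠ 0` the `Uᵢ` themselves give `G.dim R_R ≥ m`.
-/

open Set

section ModularLattice

variable {α : Type*} [CompleteLattice α] [IsModularLattice α]

theorem isChain_Icc_sup_of_isChain_Iic {n u : α} (hu : IsChain (· ≤ ·) (Iic u)) :
    IsChain (· ≤ ·) (Icc n (n ⊔ u)) := by
  have hy : ∀ y ∈ Icc n (n ⊔ u), n ⊔ u ⊓ y = y := fun y hy => by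
    rw [← sup_inf_assoc_of_le u hy.1, inf_eq_right.2 hy.2]
  intro y₁ hy₁ y₂ hy₂ _
  rw [← hy y₁ hy₁, ← hy y₂ hy₂]
  exact (hu.total (inf_le_left : u ⊓ y₁ ≤ u) (inf_le_left : u ⊓ y₂ ≤ u)).imp
    (sup_le_sup_left · n) (sup_le_sup_left · n)

theorem eq_bot_of_disjoint_sup_of_isChain_Iic {n u a x : α} (hu : IsChain (· ≤ ·) (Iic u))
    (ha : a ≠ ⊥) (han : Disjoint a n) (hau : a ≤ n ⊔ u) (hxu : x ≤ n ⊔ u)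
    (hx : Disjoint x (n ⊔ a)) : x = ⊥ := by
  have hax : Disjoint a (n ⊔ x) :=
    han.disjoint_sup_right_of_disjoint_sup_left (sup_comm a n ▸ hx.symm)
  rcases (isChain_Icc_sup_of_isChain_Iic hu).total (x := n ⊔ a) (y := n ⊔ x)
    ⟨le_sup_left, sup_le le_sup_left hau⟩ ⟨le_sup_left, sup_le le_sup_left hxu⟩ with h | h
  · exact absurd (hax.eq_bot_of_le (le_sup_right.trans h)) ha
  · exact hx.eq_bot_of_le (le_sup_right.trans h)

theorem iSupIndep.inf_sup {ι : Type*} {f : ι → α} (hf : iSupIndep f) (j₀ : ι) {n : α}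
    (hn : Disjoint (f j₀) n) : iSupIndep fun j => n ⊓ (f j ⊔ f j₀) := by
  intro j
  by_cases hj : j = j₀
  · subst hj
    dsimp only
    rw [sup_idem, inf_comm, hn.eq_bot]
    exact disjoint_bot_left
  set W := ⨆ (k) (_ : k ≠ j), f k
  have hj₀W : f j₀ ≤ W := le_iSup₂ (f := fun k (_ : k ≠ j) => f k) j₀ (Ne.symm hj)
  have hsup : (⨆ (k) (_ : k ≠ j), n ⊓ (f k ⊔ f j₀)) ≤ W := iSup₂_le fun k hk =>
    inf_le_right.trans (sup_le (le_iSup₂ (f := fun k (_ : k ≠ j) => f k) k hk) hj₀W)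
  have hW : (f j ⊔ f j₀) ⊓ W = f j₀ := by
    rw [sup_comm, sup_inf_assoc_of_le _ hj₀W, (hf j).eq_bot, sup_bot_eq]
  rw [disjoint_iff_inf_le]
  calc n ⊓ (f j ⊔ f j₀) ⊓ ⨆ (k) (_ : k ≠ j), n ⊓ (f k ⊔ f j₀)
      ≤ n ⊓ ((f j ⊔ f j₀) ⊓ W) := by
        rw [inf_assoc]; exact inf_le_inf_left _ (inf_le_inf_left _ hsup)
    _ = ⊥ := by rw [hW, inf_comm, hn.eq_bot]

theorem exists_iSupIndep_le_of_forall_le_sup {ι : Type*} [Finite ι] {f : ι → α}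
    (hf : iSupIndep f) {n u : α} (hu : IsChain (· ≤ ·) (Iic u)) (hle : ∀ j, f j ≤ n ⊔ u) :
    ∃ g : ι → α, iSupIndep g ∧ (∀ j, g j ≤ n) ∧
      {j | f j ≠ ⊥}.ncard ≤ {j | g j ≠ ⊥}.ncard + 1 := by
  by_cases h : ∃ j₀, f j₀ ≠ ⊥ ∧ Disjoint (f j₀) n
  · obtain ⟨j₀, hj₀, hdisj⟩ := h
    refine ⟨fun j => n ⊓ (f j ⊔ f j₀), hf.inf_sup j₀ hdisj, fun j => inf_le_left, ?_⟩
    refine (ncard_le_ncard fun j hj => ?_).trans (ncard_insert_le j₀ _)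
    rw [mem_insert_iff, or_iff_not_imp_left]
    intro hjj₀ hg
    have hdisj' : Disjoint (f j) (n ⊔ f j₀) := sup_comm (f j₀) n ▸
      (hf.pairwiseDisjoint hjj₀).disjoint_sup_right_of_disjoint_sup_left
        (disjoint_iff.2 (inf_comm n _ ▸ hg))
    exact hj (eq_bot_of_disjoint_sup_of_isChain_Iic hu hj₀ hdisj (hle j₀) (hle j) hdisj')
  · push Not at h
    refine ⟨fun j => f j ⊓ n, hf.mono fun j => inf_le_left, fun j => inf_le_right, ?_⟩
    exact (ncard_le_ncard fun j hj => mt disjoint_iff.2 (h j hj)).trans (Nat.le_succ _)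

theorem ncard_ne_bot_le_of_le_biSup {β : Type*} {V : β → α} (s : Finset β)
    (hV : ∀ i ∈ s, IsChain (· ≤ ·) (Iic (V i))) {ι : Type*} [Finite ι] {f : ι → α}
    (hf : iSupIndep f) (hle : ∀ j, f j ≤ ⨆ i ∈ s, V i) : {j | f j ≠ ⊥}.ncard ≤ s.card := by
  classical
  induction s using Finset.induction_on generalizing f with
  | empty => simp_all
  | insert a s ha ih =>
    obtain ⟨g, hg, hgle, hcard⟩ := exists_iSupIndep_le_of_forall_le_sup hf
      (hV a (Finset.mem_insert_self a s)) fun j => (Finset.iSup_insert a s V ▸ hle j).trans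
        (sup_comm _ (⨆ i ∈ s, V i)).le
    rw [Finset.card_insert_of_notMem ha]
    exact hcard.trans (Nat.add_le_add_right
      (ih (fun i hi => hV i (Finset.mem_insert_of_mem hi)) hg hgle) 1)

end ModularLattice

section Goldie

variable {S M M₂ : Type*} [Ring S] [AddCommGroup M] [Module S M] [AddCommGroup M₂] [Module S M₂]

theorem IsUniserialModule.isChain_Iic {P : Submodule S M} (h : IsUniserialModule S P) :
    IsChain (· ≤ ·) (Iic P) := by
  have hP : ∀ W ∈ Iic P, (W.comap P.subtype).map P.subtype = W := fun W hW => by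
    rw [Submodule.map_comap_subtype, inf_eq_right.2 hW]
  intro A hA B hB _
  rw [← hP A hA, ← hP B hB]
  exact (h _ _).imp (Submodule.map_mono ·) (Submodule.map_mono ·)

theorem isChain_Iic_map {P : Submodule S M} (hP : IsChain (· ≤ ·) (Iic P)) (π : M →ₗ[S] M₂) :
    IsChain (· ≤ ·) (Iic (P.map π)) := by
  refine IsChain.mono (fun W hW => ?_)
    (hP.image_of_map_rel (· ≤ ·) (· ≤ ·) (Submodule.map π) fun _ _ => Submodule.map_mono)
  refine ⟨P ⊓ W.comap π, mem_Iic.2 inf_le_left, ?_⟩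
  rw [← Submodule.map_inf_eq_map_inf_comap, inf_eq_right.2 hW]

theorem le_goldieDim {ι : Type*} [Finite ι] {f : ι → Submodule S M} (hf : iSupIndep f)
    (hne : ∀ j, f j ≠ ⊥) : (Nat.card ι : ℕ∞) ≤ goldieDim S M :=
  let e := (Finite.equivFin ι).symm
  le_iSup₂_of_le (Nat.card ι) ⟨f ∘ e, fun j => hne (e j), hf.comp e.injective⟩ le_rfl

theorem goldieDim_le_of_iSup_eq_top {β : Type*} [Fintype β] {V : β → Submodule S M}
    (hV : ∀ i, IsChain (· ≤ ·) (Iic (V i))) (htop : ⨆ i, V i = ⊤) :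
    goldieDim S M ≤ Fintype.card β := by
  refine iSup₂_le fun k ⟨f, hne, hf⟩ => ?_
  have hk := ncard_ne_bot_le_of_le_biSup Finset.univ (fun i _ => hV i) hf fun j => by
    simp only [Finset.mem_univ, iSup_pos, htop, le_top]
  have hall : {j | f j ≠ ⊥} = univ := eq_univ_of_forall hne
  rw [hall, ncard_univ, Nat.card_fin] at hk
  exact_mod_cast hk

theorem sgoldieDim_le_of_iSup_eq_top {β : Type*} [Fintype β] {V : β → Submodule S M}
    (hV : ∀ i, IsChain (· ≤ ·) (Iic (V i))) (htop : ⨆ i, V i = ⊤) :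
    sgoldieDim S M ≤ Fintype.card β :=
  iSup_le fun K => goldieDim_le_of_iSup_eq_top (fun i => isChain_Iic_map (hV i) K.mkQ) <| by
    rw [← Submodule.map_iSup, htop, Submodule.map_top, Submodule.range_mkQ]

theorem goldieDim_le_of_injective_s5 {π : M →ₗ[S] M₂} (hπ : Function.Injective π) :
    goldieDim S M ≤ goldieDim S M₂ :=
  iSup₂_le fun k ⟨f, hne, hf⟩ => by
    simpa using le_goldieDim (π.iSupIndep_map hπ hf) fun j =>
      Submodule.map_bot π ▸ (Submodule.map_injective_of_injective hπ).ne (hne j)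

theorem goldieDim_le_sgoldieDim : goldieDim S M ≤ sgoldieDim S M := by
  have hinj : Function.Injective (⊥ : Submodule S M).mkQ := by
    rw [← LinearMap.ker_eq_bot, Submodule.ker_mkQ]
  exact (goldieDim_le_of_injective_s5 hinj).trans
    (le_iSup (fun K : Submodule S M => goldieDim S (M ⧸ K)) ⊥)

end Goldie

/-- If R is right serial then R is strongly right finite dimensional and
SG.dim R_R = G.dim R_R.  (Right R-modules are modules over Rᵐᵒᵖ.) -/
theorem sgoldieDim_eq_goldieDim_of_rightSerial {R : Type*} [Ring R]
    (hserial : ∃ (n : ℕ) (U : Fin n → Submodule Rᵐᵒᵖ R),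
      DirectSum.IsInternal U ∧ ∀ i, IsUniserialModule Rᵐᵒᵖ ↥(U i)) :
    sgoldieDim Rᵐᵒᵖ R < ⊤ ∧ sgoldieDim Rᵐᵒᵖ R = goldieDim Rᵐᵒᵖ R := by
  obtain ⟨n, U, hU, hUuni⟩ := hserial
  have hV : ∀ i : {i // U i ≠ ⊥}, IsChain (· ≤ ·) (Iic (U i)) := fun i => (hUuni i).isChain_Iic
  have htop : ⨆ i : {i // U i ≠ ⊥}, U i = ⊤ :=
    (iSup_ne_bot_subtype U).trans hU.submodule_iSup_eq_top
  have hsg := sgoldieDim_le_of_iSup_eq_top hV htop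
  have hg : (Fintype.card {i // U i ≠ ⊥} : ℕ∞) ≤ goldieDim Rᵐᵒᵖ R := by
    have hind := hU.submodule_iSupIndep.comp (Subtype.val_injective (p := fun i => U i ≠ ⊥))
    simpa [Nat.card_eq_fintype_card] using le_goldieDim hind fun i => i.2
  exact ⟨hsg.trans_lt (ENat.natCast_lt_top _),
    le_antisymm (hsg.trans hg) goldieDim_le_sgoldieDim⟩
end

section
/- For n ≥ 2, a right R-module M satisfies SG.dim M = n if and only if the supremum of |𝒜| over all coindependent families 𝒜 of proper submodules of any submodule N of any quotient module of M equals n. -/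
/-- A family of proper submodules is coindependent if each member together with the
intersection of finitely many of the others is the whole module. -/
def Coindependent {R M ι : Type*} [Ring R] [AddCommGroup M] [Module R M]
    (K : ι → Submodule R M) : Prop :=
  (∀ i, K i ≠ ⊤) ∧ ∀ (i : ι) (s : Finset ι), i ∉ s → K i ⊔ (⨅ j ∈ s, K j) = ⊤

/-!
An independent family `t₁, …, tₘ` of nonzero submodules of a quotient `M/Q` yields, inside
`N = ∑ tᵢ`, the coindependent family of partial sums `∑_{j ≠ i} tⱼ`. Conversely, a coindependent
family `K₁, …, Kₘ` in a subquotient `N` yields, modulo `T = ⋂ Kᵢ`, the independent family of the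
images of `Dᵢ = ⋂_{j ≠ i} Kⱼ`, because `Dᵢ ⊓ Kᵢ = T` and `Dᵢ ⊔ Kᵢ = N`; and `N/T` embeds in a
quotient of `M`, so its Goldie dimension is bounded by `SG.dim M`.
-/

open Submodule

section

variable {R A B ι : Type*} [Ring R] [AddCommGroup A] [Module R A] [AddCommGroup B] [Module R B]

theorem iSupIndep_map_iff_of_injective {t : ι → Submodule R A} (f : A →ₗ[R] B)
    (hf : Function.Injective f) : iSupIndep (fun i => (t i).map f) ↔ iSupIndep t := by
  refine forall_congr' fun i => ?_
  have h : (⨆ (j) (_ : j ≠ i), (t j).map f) = (⨆ (j) (_ : j ≠ i), t j).map f := by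
    simp only [Submodule.map_iSup]
  rw [disjoint_iff, disjoint_iff, h, ← map_inf f hf, ← Submodule.map_bot f,
    (map_injective_of_injective hf).eq_iff]

theorem goldieDim_le_of_injective_s10 (f : A →ₗ[R] B) (hf : Function.Injective f) :
    goldieDim R A ≤ goldieDim R B :=
  iSup₂_le fun m ⟨g, hg0, hg⟩ => le_iSup₂_of_le m ⟨fun i => (g i).map f,
    fun i => Submodule.map_bot f ▸ (map_injective_of_injective hf).ne (hg0 i),
    (iSupIndep_map_iff_of_injective f hf).mpr hg⟩ le_rfl

theorem sgoldieDim_le_of_injective (f : A →ₗ[R] B) (hf : Function.Injective f) :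
    sgoldieDim R A ≤ sgoldieDim R B := by
  refine iSup_le fun T => le_iSup_of_le (T.map f) (goldieDim_le_of_injective_s10
    (T.mapQ (T.map f) f (le_comap_map f T)) (LinearMap.ker_eq_bot.mp ?_))
  rw [ker_mapQ, comap_map_eq_of_injective hf, mkQ_map_self]

theorem sgoldieDim_le_of_surjective (f : A →ₗ[R] B) (hf : Function.Surjective f) :
    sgoldieDim R B ≤ sgoldieDim R A := by
  refine iSup_le fun K => ?_
  let e := (K.mkQ ∘ₗ f).quotKerEquivOfSurjective (K.mkQ_surjective.comp hf)
  exact le_iSup_of_le _ (goldieDim_le_of_injective_s10 e.symm.toLinearMap e.symm.injective)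

theorem map_subtype_comap_subtype_iSup (t : ι → Submodule R A) (i : ι) :
    ((t i).comap (⨆ j, t j).subtype).map (⨆ j, t j).subtype = t i := by
  rw [map_comap_subtype, inf_eq_right.mpr (le_iSup t i)]

theorem iSupIndep_comap_subtype_iSup_iff {t : ι → Submodule R A} :
    iSupIndep (fun i => (t i).comap (⨆ j, t j).subtype) ↔ iSupIndep t := by
  rw [← iSupIndep_map_iff_of_injective _ (injective_subtype _)]
  simp only [map_subtype_comap_subtype_iSup]

theorem iSup_comap_subtype_iSup (t : ι → Submodule R A) :
    ⨆ i, (t i).comap (⨆ j, t j).subtype = ⊤ := by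
  apply map_injective_of_injective (injective_subtype (⨆ j, t j))
  rw [Submodule.map_iSup, Submodule.map_top, range_subtype]
  simp only [map_subtype_comap_subtype_iSup]

theorem iSupIndep.coindependent_iSup_ne {t : ι → Submodule R A} (ht : iSupIndep t)
    (ht0 : ∀ i, t i ≠ ⊥) (htop : ⨆ i, t i = ⊤) :
    Coindependent fun i => ⨆ (j) (_ : j ≠ i), t j := by
  have hsup : ∀ i, t i ⊔ ⨆ (j) (_ : j ≠ i), t j = ⊤ := fun i =>
    htop ▸ (iSup_split_single t i).symm
  refine ⟨fun i hi => ht0 i ((ht i).eq_bot_of_le (le_top.trans_eq hi.symm)), fun i s hi => ?_⟩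
  have hle : t i ≤ ⨅ j ∈ s, ⨆ (k) (_ : k ≠ j), t k := le_iInf₂ fun j hj =>
    le_iSup₂_of_le (f := fun k (_ : k ≠ j) => t k) i (ne_of_mem_of_not_mem hj hi).symm le_rfl
  rw [eq_top_iff, ← hsup i, sup_comm]
  exact sup_le_sup_left hle _

theorem goldieDim_le_iSup_coindependent :
    goldieDim R A ≤ ⨆ (N : Submodule R A) (m : ℕ)
      (_ : ∃ K : Fin m → Submodule R N, Coindependent K), (m : ℕ∞) := by
  refine iSup₂_le fun m ⟨t, ht0, ht⟩ => le_iSup_of_le (⨆ i, t i) (le_iSup₂_of_le m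
    ⟨_, (iSupIndep_comap_subtype_iSup_iff.mpr ht).coindependent_iSup_ne (fun i h => ht0 i ?_)
      (iSup_comap_subtype_iSup t)⟩ le_rfl)
  rw [← map_subtype_comap_subtype_iSup t i, h, Submodule.map_bot]

theorem Coindependent.exists_iSupIndep_quotient_iInf [Finite ι] {K : ι → Submodule R A}
    (hK : Coindependent K) :
    ∃ f : ι → Submodule R (A ⧸ ⨅ i, K i), (∀ i, f i ≠ ⊥) ∧ iSupIndep f := by
  classical
  cases nonempty_fintype ι
  set T := ⨅ i, K i
  set D : ι → Submodule R A := fun i => ⨅ j ∈ Finset.univ.erase i, K j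
  have hDK : ∀ i j, j ≠ i → D i ≤ K j := fun i j hj =>
    iInf₂_le j (Finset.mem_erase.mpr ⟨hj, Finset.mem_univ j⟩)
  have hsup : ∀ i, K i ⊔ D i = ⊤ := fun i =>
    hK.2 i (Finset.univ.erase i) (Finset.notMem_erase i _)
  have hinf : ∀ i, D i ⊓ K i = T := fun i => le_antisymm
    (le_iInf fun j => (eq_or_ne j i).elim (· ▸ inf_le_right) (inf_le_left.trans <| hDK i j ·))
    (le_inf (le_iInf₂ fun j _ => iInf_le K j) (iInf_le K i))
  refine ⟨fun i => (D i).map T.mkQ, fun i h => hK.1 i ?_, fun i => ?_⟩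
  · rw [← LinearMap.le_ker_iff_map, ker_mkQ] at h
    rw [← hsup i, sup_eq_left.mpr (h.trans (iInf_le K i))]
  · refine Disjoint.mono_right (iSup₂_le fun j hj => map_mono (hDK j i (Ne.symm hj))) ?_
    rw [disjoint_iff, map_inf_eq_map_inf_comap, comap_map_mkQ, sup_eq_right.mpr (iInf_le K i),
      hinf, mkQ_map_self]

end

theorem sgoldieDim_eq_iff_coindependent_sup_general {R M : Type*} [Ring R] [AddCommGroup M]
    [Module R M] (n : ℕ) :
    sgoldieDim R M = n ↔
      (⨆ (Q : Submodule R M) (N : Submodule R (M ⧸ Q)) (m : ℕ)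
        (_ : ∃ K : Fin m → Submodule R ↥N, Coindependent K), (m : ℕ∞)) = n := by
  suffices h : sgoldieDim R M = ⨆ (Q : Submodule R M) (N : Submodule R (M ⧸ Q)) (m : ℕ)
      (_ : ∃ K : Fin m → Submodule R ↥N, Coindependent K), (m : ℕ∞) by rw [h]
  refine le_antisymm (iSup_mono fun Q => goldieDim_le_iSup_coindependent) ?_
  refine iSup_le fun Q => iSup_le fun N => iSup₂_le fun m ⟨K, hK⟩ => ?_
  obtain ⟨f, hf0, hf⟩ := hK.exists_iSupIndep_quotient_iInf
  calc (m : ℕ∞) ≤ goldieDim R (N ⧸ ⨅ i, K i) := le_iSup₂_of_le m ⟨f, hf0, hf⟩ le_rfl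
    _ ≤ sgoldieDim R N := le_iSup (fun T => goldieDim R (N ⧸ T)) _
    _ ≤ sgoldieDim R (M ⧸ Q) := sgoldieDim_le_of_injective N.subtype N.injective_subtype
    _ ≤ sgoldieDim R M := sgoldieDim_le_of_surjective Q.mkQ Q.mkQ_surjective

/-- For n ≥ 2, SG.dim M = n iff the supremum of the sizes of coindependent families of
proper submodules of submodules of quotients of M equals n. -/
theorem sgoldieDim_eq_iff_coindependent_sup {R M : Type*} [Ring R] [AddCommGroup M]
    [Module R M] (n : ℕ) (hn : 2 ≤ n) :
    sgoldieDim R M = n ↔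
      (⨆ (Q : Submodule R M) (N : Submodule R (M ⧸ Q)) (m : ℕ)
        (_ : ∃ K : Fin m → Submodule R ↥N, Coindependent K), (m : ℕ∞)) = n :=
  sgoldieDim_eq_iff_coindependent_sup_general n
end

section
/- If M is a module of finite length, then SG.dim M ≤ c(M), and SG.dim M = c(M) < +∞ if and only if M is semisimple. -/
/-- The composition length of a module, as the supremum of lengths of composition series
from ⊥ to ⊤ (equal to the usual length for finite-length modules by Jordan–Hölder). -/
noncomputable def compLength (R M : Type*) [Ring R] [AddCommGroup M] [Module R M] : ℕ∞ :=
  ⨆ (s : CompositionSeries (Submodule R M)) (_ : s.head = ⊥ ∧ s.last = ⊤), (s.length : ℕ∞)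

section Aux

variable {R M : Type*} [Ring R] [AddCommGroup M] [Module R M]

open Submodule

/-- partial sups of a finite family of submodules -/
private def psups {k : ℕ} (f : Fin k → Submodule R M) (j : Fin (k + 1)) : Submodule R M :=
  ⨆ (i : Fin k) (_ : (i : ℕ) < (j : ℕ)), f i

private lemma psups_zero {k : ℕ} (f : Fin k → Submodule R M) : psups f 0 = ⊥ := by
  simp [psups]

private lemma psups_last {k : ℕ} (f : Fin k → Submodule R M) :
    psups f (Fin.last k) = ⨆ i, f i := by
  simp [psups, Fin.is_lt]

private lemma psups_mono {k : ℕ} (f : Fin k → Submodule R M) : Monotone (psups f) := by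
  intro j j' hj
  exact iSup₂_le fun i hi => le_iSup₂ (f := fun i _ => f i) i (hi.trans_le hj)

private lemma psups_disjoint {k : ℕ} {f : Fin k → Submodule R M} (hf : iSupIndep f)
    (j : Fin k) : Disjoint (f j) (psups f j.castSucc) := by
  refine (hf j).mono_right (iSup₂_le fun i hi => ?_)
  refine le_iSup₂ (f := fun i (_ : i ≠ j) => f i) i ?_
  intro hij
  subst hij
  simp at hi

private lemma psups_succ {k : ℕ} (f : Fin k → Submodule R M) (j : Fin k) :
    psups f j.succ = psups f j.castSucc ⊔ f j := by
  apply le_antisymm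
  · refine iSup₂_le fun i hi => ?_
    rcases lt_or_eq_of_le (Nat.lt_succ_iff.mp (show (i : ℕ) < (j : ℕ) + 1 by simp only [Fin.val_succ] at hi; exact hi)) with h | h
    · exact le_sup_of_le_left (le_iSup₂ (f := fun i _ => f i) i (by simpa using h))
    · exact le_sup_of_le_right (by rw [Fin.ext h])
  · refine sup_le (psups_mono f (by simp [Fin.le_def])) ?_
    exact le_iSup₂ (f := fun i _ => f i) j (by simp)

private lemma psups_lt {k : ℕ} {f : Fin k → Submodule R M} (hf : iSupIndep f)
    (h0 : ∀ i, f i ≠ ⊥) (j : Fin k) : psups f j.castSucc < psups f j.succ := by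
  rw [psups_succ, sup_comm]
  refine right_lt_sup.mpr fun hle => h0 j ?_
  exact (psups_disjoint hf j).eq_bot_of_le hle

/-- the LTSeries of partial sups of an independent family of nonzero submodules -/
private def psupsLT {k : ℕ} {f : Fin k → Submodule R M} (hf : iSupIndep f)
    (h0 : ∀ i, f i ≠ ⊥) : LTSeries (Submodule R M) :=
  ⟨k, psups f, fun j => psups_lt hf h0 j⟩

private lemma covBy_coe_Icc {a b : Submodule R M} {x y : ↥(Set.Icc a b)}
    (h : x ⋖ y) : (x : Submodule R M) ⋖ (y : Submodule R M) := by
  refine ⟨h.lt, fun z hz1 hz2 => ?_⟩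
  have hz : z ∈ Set.Icc a b := ⟨x.2.1.trans hz1.le, hz2.le.trans y.2.2⟩
  exact h.2 (show x < (⟨z, hz⟩ : ↥(Set.Icc a b)) from hz1)
    (show (⟨z, hz⟩ : ↥(Set.Icc a b)) < y from hz2)

private lemma exists_compSeries [IsNoetherian R M] [IsArtinian R M]
    {a b : Submodule R M} (hab : a ≤ b) :
    ∃ s : CompositionSeries (Submodule R M), s.head = a ∧ s.last = b := by
  haveI : WellFoundedGT ↥(Set.Icc a b) := (Subtype.strictMono_coe _).wellFoundedGT
  haveI : WellFoundedLT ↥(Set.Icc a b) := (Subtype.strictMono_coe _).wellFoundedLT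
  haveI : Nonempty ↥(Set.Icc a b) := ⟨⟨a, le_refl a, hab⟩⟩
  obtain ⟨g, g0, n, gn, hstep⟩ := exists_covBy_seq_of_wellFoundedLT_wellFoundedGT ↥(Set.Icc a b)
  have ha : (⟨a, le_refl a, hab⟩ : ↥(Set.Icc a b)) ≤ g 0 := (g 0).2.1
  have h0 : g 0 = ⟨a, le_refl a, hab⟩ := le_antisymm (g0 ha) ha
  have hb : g n ≤ (⟨b, hab, le_refl b⟩ : ↥(Set.Icc a b)) := (g n).2.2
  have hn : g n = ⟨b, hab, le_refl b⟩ := le_antisymm hb (gn hb)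
  refine ⟨⟨n, fun i => (g i : Submodule R M), fun i => covBy_coe_Icc (hstep i i.2)⟩, ?_, ?_⟩
  · show (g ((0 : Fin (n+1)) : ℕ) : Submodule R M) = a
    rw [show (((0 : Fin (n+1))) : ℕ) = 0 from rfl, h0]
  · show (g ((Fin.last n : Fin (n+1)) : ℕ) : Submodule R M) = b
    rw [show ((Fin.last n : Fin (n+1)) : ℕ) = n from rfl, hn]

/-- any LT series refines to a composition series with the same endpoints -/
private lemma exists_compSeries_of_ltSeries [IsNoetherian R M] [IsArtinian R M]
    (p : LTSeries (Submodule R M)) :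
    ∃ s : CompositionSeries (Submodule R M),
      s.head = p.head ∧ s.last = p.last ∧ p.length ≤ s.length := by
  suffices H : ∀ (n : ℕ) (p : LTSeries (Submodule R M)), p.length = n →
      ∃ s : CompositionSeries (Submodule R M),
        s.head = p.head ∧ s.last = p.last ∧ p.length ≤ s.length from H p.length p rfl
  intro n
  induction n with
  | zero =>
    intro p hn
    refine ⟨RelSeries.singleton _ p.head, rfl, ?_, by simp [hn]⟩
    have : p.head = p.last := by
      show p 0 = p (Fin.last _)
      congr 1
      ext
      simp [hn]
    rw [← this]; rfl
  | succ n ih =>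
    intro p hn
    have hpne : p.length ≠ 0 := by omega
    obtain ⟨t, th, tl, htlen⟩ := ih p.eraseLast (by simp [hn])
    have hlt : p.eraseLast.last < p.last := p.eraseLast_last_rel_last hpne
    obtain ⟨c, ch, cl⟩ := exists_compSeries (R := R) (M := M) hlt.le
    have hclen : 0 < c.length := by
      rcases Nat.eq_zero_or_pos c.length with h | h
      · exfalso
        have : c.head = c.last := by
          show c 0 = c (Fin.last _)
          congr 1
          ext
          simp [h]
        rw [ch, cl] at this
        exact hlt.ne this
      · exact h
    refine ⟨t.smash c (by rw [tl, ch]), ?_, ?_, ?_⟩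
    · rw [RelSeries.head_smash, th, RelSeries.head_eraseLast]
    · rw [RelSeries.last_smash, cl]
    · rw [RelSeries.smash_length]
      have he : p.eraseLast.length = n := by simp [hn]
      omega

/-- chain bound: any strict chain of submodules is at most as long as a composition series -/
private lemma ltSeries_length_le [IsNoetherian R M] [IsArtinian R M]
    (s : CompositionSeries (Submodule R M)) (hh : s.head = ⊥) (hl : s.last = ⊤)
    (p : LTSeries (Submodule R M)) : p.length ≤ s.length := by
  obtain ⟨t, th, tl, htlen⟩ := exists_compSeries_of_ltSeries p
  obtain ⟨c1, c1h, c1l⟩ := exists_compSeries (bot_le : ⊥ ≤ p.head)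
  obtain ⟨c2, c2h, c2l⟩ := exists_compSeries (le_top : p.last ≤ ⊤)
  have hu1 : c1.last = t.head := by rw [c1l, th]
  have hu2 : (c1.smash t hu1).last = c2.head := by rw [RelSeries.last_smash, tl, c2h]
  have hlen : ((c1.smash t hu1).smash c2 hu2).length = s.length := by
    refine CompositionSeries.Equivalent.length_eq (CompositionSeries.jordan_holder _ _ ?_ ?_)
    · rw [show ((c1.smash t hu1).smash c2 hu2).head = c1.head by
        rw [RelSeries.head_smash, RelSeries.head_smash], c1h, hh]
    · rw [show ((c1.smash t hu1).smash c2 hu2).last = c2.last from RelSeries.last_smash _, c2l, hl]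
  have hlen2 : ((c1.smash t hu1).smash c2 hu2).length = c1.length + t.length + c2.length := by
    rw [RelSeries.smash_length, RelSeries.smash_length]
  omega

private lemma compLength_eq {s : CompositionSeries (Submodule R M)}
    (h1 : s.head = ⊥) (h2 : s.last = ⊤) : compLength R M = s.length := by
  apply le_antisymm
  · refine iSup_le fun t => iSup_le fun ht => ?_
    have := CompositionSeries.Equivalent.length_eq
      (CompositionSeries.jordan_holder t s (by rw [ht.1, h1]) (by rw [ht.2, h2]))
    exact_mod_cast this.le
  · exact le_iSup_of_le s (le_iSup_of_le ⟨h1, h2⟩ le_rfl)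

end Aux

/-- If M has finite length then SG.dim M ≤ c(M), with equality iff M is semisimple. -/
theorem sgoldieDim_le_compLength {R M : Type*} [Ring R] [AddCommGroup M] [Module R M]
    (h : IsFiniteLength R M) :
    sgoldieDim R M ≤ compLength R M ∧
      (sgoldieDim R M = compLength R M ↔ IsSemisimpleModule R M) := by
  obtain ⟨hNoe, hArt⟩ := isFiniteLength_iff_isNoetherian_isArtinian.mp h
  obtain ⟨s, hsh, hsl⟩ := isFiniteLength_iff_exists_compositionSeries.mp h
  have hcomp : compLength R M = s.length := compLength_eq hsh hsl
  have chainM : ∀ p : LTSeries (Submodule R M), p.length ≤ s.length :=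
    ltSeries_length_le s hsh hsl
  have chainQ : ∀ (K : Submodule R M) (p : LTSeries (Submodule R (M ⧸ K))),
      p.length ≤ s.length := by
    intro K p
    exact chainM (p.map (Submodule.comap K.mkQ)
      (Submodule.comap_strictMono_of_surjective (Submodule.mkQ_surjective K)))
  have goldie_le : ∀ K : Submodule R M, goldieDim R (M ⧸ K) ≤ (s.length : ℕ∞) := by
    intro K
    refine iSup_le fun k => iSup_le fun hk => ?_
    obtain ⟨f, hf0, hfi⟩ := hk
    have hle : k ≤ s.length := chainQ K (psupsLT hfi hf0)
    exact_mod_cast hle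
  have part1 : sgoldieDim R M ≤ compLength R M := by
    rw [hcomp]; exact iSup_le goldie_le
  refine ⟨part1, ?_, ?_⟩
  · -- equality → semisimple
    intro heq
    rcases Nat.eq_zero_or_pos s.length with hzero | hpos
    · -- M is trivial
      have hbt : (⊥ : Submodule R M) = ⊤ := by
        rw [← hsh, ← hsl]
        show s 0 = s (Fin.last _)
        congr 1
        ext
        simp [hzero]
      have hsub : Subsingleton M := by
        constructor
        intro x y
        have hx : x ∈ (⊥ : Submodule R M) := hbt ▸ Submodule.mem_top
        have hy : y ∈ (⊥ : Submodule R M) := hbt ▸ Submodule.mem_top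
        rw [Submodule.mem_bot] at hx hy
        rw [hx, hy]
      haveI := hsub
      exact (isSemisimpleModule_iff R M).mpr ⟨fun a => ⟨⊥, disjoint_bot_right, codisjoint_iff.mpr (Subsingleton.elim _ _)⟩⟩
    · have hlt : ((s.length - 1 : ℕ) : ℕ∞) < sgoldieDim R M := by
        rw [heq, hcomp]
        exact_mod_cast Nat.sub_lt hpos one_pos
      obtain ⟨K, hK⟩ := lt_iSup_iff.mp hlt
      obtain ⟨k, hk⟩ := lt_iSup_iff.mp hK
      obtain ⟨hfam, hk2⟩ := lt_iSup_iff.mp hk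
      obtain ⟨f0, hf00, hf0ind⟩ := hfam
      have hkn : s.length ≤ k := by
        have : (s.length - 1 : ℕ) < k := by exact_mod_cast hk2
        omega
      set f : Fin s.length → Submodule R (M ⧸ K) := f0 ∘ Fin.castLE hkn with hf
      have hfind : iSupIndep f := hf0ind.comp (Fin.strictMono_castLE hkn).injective
      have hf0' : ∀ i, f i ≠ ⊥ := fun i => hf00 _
      -- K must be ⊥
      have hKbot : K = ⊥ := by
        by_contra hKne
        set p := (psupsLT hfind hf0').map (Submodule.comap K.mkQ)
          (Submodule.comap_strictMono_of_surjective (Submodule.mkQ_surjective K)) with hp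
        have hphead : p.head = K := by
          show Submodule.comap K.mkQ (psups f 0) = K
          rw [psups_zero, Submodule.comap_bot, Submodule.ker_mkQ]
        have hcons := chainM (p.cons ⊥ (by rw [hphead]; exact bot_lt_iff_ne_bot.mpr hKne))
        have : 0 + s.length + 1 ≤ s.length := hcons
        omega
      -- each f i is an atom
      have hatom : ∀ i, IsAtom (f i) := by
        intro i
        refine ⟨hf0' i, fun x hx => ?_⟩
        by_contra hxne
        have h1 : psups f i.castSucc < psups f i.castSucc ⊔ x := by
          rw [sup_comm]
          refine right_lt_sup.mpr fun hle => hxne ?_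
          exact ((psups_disjoint hfind i).mono_left hx.le).eq_bot_of_le hle
        have h2 : psups f i.castSucc ⊔ x < psups f i.succ := by
          rw [psups_succ]
          refine lt_of_le_of_ne (sup_le_sup_left hx.le _) fun hEq => ?_
          have hfle : f i ≤ x ⊔ psups f i.castSucc := by
            rw [sup_comm x]
            rw [hEq]
            exact le_sup_right
          have h3 : (x ⊔ psups f i.castSucc) ⊓ f i = x := by
            rw [sup_inf_assoc_of_le _ hx.le,
              disjoint_iff.mp (psups_disjoint hfind i).symm, sup_bot_eq]
          rw [inf_eq_right.mpr hfle] at h3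
          exact hx.ne' h3
        have hins := chainQ K ((psupsLT hfind hf0').insertNth i (psups f i.castSucc ⊔ x) h1 h2)
        have : s.length + 1 ≤ s.length := hins
        omega
      -- the supremum is everything
      have hsup : (⨆ i, f i) = ⊤ := by
        by_contra hne
        have hsn := chainQ K ((psupsLT hfind hf0').snoc ⊤
          (by show psups f (Fin.last _) < ⊤; rw [psups_last]; exact lt_top_iff_ne_top.mpr hne))
        have : s.length + 1 ≤ s.length := hsn
        omega
      haveI hssN : IsSemisimpleModule R (M ⧸ K) := by
        apply IsSemisimpleModule.of_sSup_simples_eq_top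
        apply le_antisymm le_top
        rw [← hsup]
        exact iSup_le fun i => le_sSup (show f i ∈ {m : Submodule R (M ⧸ K) | IsSimpleModule R m}
          from isSimpleModule_iff_isAtom.mpr (hatom i))
      exact IsSemisimpleModule.congr (Submodule.quotEquivOfEqBot K hKbot).symm
  · -- semisimple → equality
    intro hss
    refine le_antisymm part1 ?_
    obtain ⟨c, cfin, cind, csup, csimple⟩ := (IsSemisimpleModule.finite_tfae.out 3 4).mp h
    haveI := cfin.fintype
    set k := Fintype.card c with hkdef
    let e : Fin k ≃ c := (Fintype.equivFin c).symm
    set f : Fin k → Submodule R M := fun i => (e i : Submodule R M) with hfdef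
    have hfind : iSupIndep f := ((sSupIndep_iff c).mp cind).comp e.injective
    have hatom : ∀ i, IsAtom (f i) := fun i =>
      isSimpleModule_iff_isAtom.mp (csimple _ (e i).2)
    have hf0 : ∀ i, f i ≠ ⊥ := fun i => (hatom i).1
    have hfsup : (⨆ i, f i) = ⊤ := by
      rw [show (⨆ i, f i) = ⨆ (x : c), (x : Submodule R M) from
        e.iSup_comp (g := fun (x : c) => (x : Submodule R M)), ← sSup_eq_iSup']
      exact csup
    have hstep : ∀ j : Fin k, psups f j.castSucc ⋖ psups f j.succ := by
      intro j
      rw [psups_succ, sup_comm]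
      refine covBy_sup_of_inf_covBy_left ?_
      rw [disjoint_iff.mp (psups_disjoint hfind j)]
      exact (hatom j).bot_covBy
    set t : CompositionSeries (Submodule R M) := ⟨k, psups f, fun j => hstep j⟩ with htdef
    have hth : t.head = ⊥ := psups_zero f
    have htl : t.last = ⊤ := by
      show psups f (Fin.last k) = ⊤
      rw [psups_last, hfsup]
    have hk : k = s.length :=
      CompositionSeries.Equivalent.length_eq
        (CompositionSeries.jordan_holder t s (by rw [hth, hsh]) (by rw [htl, hsl]))
    -- transfer the family to M ⧸ ⊥
    let osi : Submodule R M ≃o Submodule R (M ⧸ (⊥ : Submodule R M)) :=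
      Submodule.orderIsoMapComap (Submodule.quotEquivOfEqBot (⊥ : Submodule R M) rfl).symm
    have hind' : iSupIndep (fun i => osi (f i)) := hfind.map_orderIso osi
    have h0' : ∀ i, osi (f i) ≠ ⊥ := by
      intro i hbot
      apply hf0 i
      have := congrArg osi.symm hbot
      rwa [osi.symm_apply_apply, osi.symm.map_bot] at this
    have hgoldie : (k : ℕ∞) ≤ goldieDim R (M ⧸ (⊥ : Submodule R M)) :=
      le_iSup_of_le k (le_iSup_of_le ⟨fun i => osi (f i), h0', hind'⟩ le_rfl)
    rw [hcomp]
    calc (s.length : ℕ∞) = (k : ℕ∞) := by rw [hk]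
      _ ≤ goldieDim R (M ⧸ (⊥ : Submodule R M)) := hgoldie
      _ ≤ sgoldieDim R M := le_iSup_of_le ⊥ le_rfl
end

section
/- A ring R is left F-injective if and only if (1) r(T ∩ T') = r(T) + r(T') for all finitely generated left ideals T, T' of R, and (2) rl(a) = aR for all a ∈ R. -/
/-- The right annihilator of a subset of R, as a right ideal (an Rᵐᵒᵖ-submodule of R). -/
def rAnn {R : Type*} [Ring R] (X : Set R) : Submodule Rᵐᵒᵖ R where
  carrier := {x | ∀ t ∈ X, t * x = 0}
  add_mem' := by intro a b ha hb t ht; rw [mul_add, ha t ht, hb t ht, add_zero]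
  zero_mem' := by intro t ht; rw [mul_zero]
  smul_mem' := by
    intro c x hx t ht
    show t * (c • x) = 0
    have h : c • x = x * c.unop := rfl
    rw [h, ← mul_assoc, hx t ht, zero_mul]

/-- The left annihilator of a subset of R, as a left ideal (an R-submodule of R). -/
def lAnn {R : Type*} [Ring R] (X : Set R) : Submodule R R where
  carrier := {x | ∀ t ∈ X, x * t = 0}
  add_mem' := by intro a b ha hb t ht; rw [add_mul, ha t ht, hb t ht, add_zero]
  zero_mem' := by intro t ht; rw [zero_mul]
  smul_mem' := by
    intro c x hx t ht
    show (c * x) * t = 0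
    rw [mul_assoc, hx t ht, mul_zero]

/-- R is left F-injective if every homomorphism from a finitely generated left ideal to R
extends to an endomorphism of the left module R. -/
def LeftFInjective (R : Type*) [Ring R] : Prop :=
  ∀ I : Submodule R R, I.FG → ∀ f : I →ₗ[R] R, ∃ g : R →ₗ[R] R, ∀ x : I, g x = f x

/-- R is right F-injective if every homomorphism from a finitely generated right ideal to R
extends to an endomorphism of the right module R. -/
def RightFInjective (R : Type*) [Ring R] : Prop :=
  ∀ I : Submodule Rᵐᵒᵖ R, I.FG → ∀ f : I →ₗ[Rᵐᵒᵖ] R, ∃ g : R →ₗ[Rᵐᵒᵖ] R, ∀ x : I, g x = f x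

section Aux
variable {R : Type*} [Ring R]

lemma mem_rAnn' {X : Set R} {x : R} : x ∈ rAnn X ↔ ∀ t ∈ X, t * x = 0 := Iff.rfl

/-- Forward direction, condition (1). -/
lemma FInj_cond1 (hF : LeftFInjective R) (T T₂ : Submodule R R) (hT : T.FG) (hT₂ : T₂.FG) :
    rAnn ((T ⊓ T₂ : Submodule R R) : Set R) = rAnn (T : Set R) ⊔ rAnn (T₂ : Set R) := by
  apply le_antisymm
  · intro b hb
    have hb' : ∀ t ∈ T ⊓ T₂, t * b = 0 := hb
    have hx : ∀ x : ↥(T ⊔ T₂), ∃ t, t ∈ T ∧ ∃ t', t' ∈ T₂ ∧ t + t' = (x : R) := by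
      intro x
      have := Submodule.mem_sup.1 x.2
      tauto
    choose d hd d' hd' hdd using hx
    have key : ∀ (x : ↥(T ⊔ T₂)) (t t' : R), t ∈ T → t' ∈ T₂ → t + t' = (x : R) →
        d x * b = t * b := by
      intro x t t' ht ht' hsum
      have h2 : d x - t = t' - d' x := by
        rw [sub_eq_sub_iff_add_eq_add, hdd x, ← hsum]
        abel
      have h1 : d x - t ∈ T ⊓ T₂ :=
        ⟨T.sub_mem (hd x) ht, h2 ▸ T₂.sub_mem ht' (hd' x)⟩
      have := hb' _ h1
      rw [sub_mul, sub_eq_zero] at this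
      exact this
    let θ : ↥(T ⊔ T₂) →ₗ[R] R :=
      { toFun := fun x => d x * b
        map_add' := by
          intro x y
          show d (x + y) * b = d x * b + d y * b
          have := key (x + y) (d x + d y) (d' x + d' y) (T.add_mem (hd x) (hd y))
            (T₂.add_mem (hd' x) (hd' y))
            (by rw [Submodule.coe_add, ← hdd x, ← hdd y]; abel)
          rw [this, add_mul]
        map_smul' := by
          intro r x
          show d (r • x) * b = r • (d x * b)
          have := key (r • x) (r * d x) (r * d' x)
            (by simpa [smul_eq_mul] using T.smul_mem r (hd x))
            (by simpa [smul_eq_mul] using T₂.smul_mem r (hd' x))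
            (by rw [Submodule.coe_smul, smul_eq_mul, ← hdd x, mul_add])
          rw [this, smul_eq_mul, mul_assoc] }
    obtain ⟨g, hg⟩ := hF (T ⊔ T₂) (hT.sup hT₂) θ
    set c := g 1 with hc
    have hgx : ∀ x : R, g x = x * c := by
      intro x
      have := g.map_smul x 1
      simpa [smul_eq_mul] using this
    have hcT₂ : c ∈ rAnn (T₂ : Set R) := by
      intro t' ht'
      have hmem : t' ∈ T ⊔ T₂ := Submodule.mem_sup_right ht'
      have h₁ := hg ⟨t', hmem⟩
      rw [hgx] at h₁
      have h₂ : θ ⟨t', hmem⟩ = 0 * b := key ⟨t', hmem⟩ 0 t' (zero_mem T) ht' (zero_add t')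
      rw [h₂, zero_mul] at h₁
      exact h₁
    have hbcT : b - c ∈ rAnn (T : Set R) := by
      intro t ht
      have hmem : t ∈ T ⊔ T₂ := Submodule.mem_sup_left ht
      have h₁ := hg ⟨t, hmem⟩
      rw [hgx] at h₁
      have h₂ : θ ⟨t, hmem⟩ = t * b := key ⟨t, hmem⟩ t 0 ht (zero_mem T₂) (add_zero t)
      rw [h₂] at h₁
      rw [mul_sub, ← h₁, sub_self]
    have : b - c + c ∈ rAnn (T : Set R) ⊔ rAnn (T₂ : Set R) :=
      Submodule.add_mem_sup hbcT hcT₂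
    simpa using this
  · refine sup_le ?_ ?_
    · intro x hx t ht
      exact hx t ht.1
    · intro x hx t ht
      exact hx t ht.2

/-- Forward direction, condition (2). -/
lemma FInj_cond2 (hF : LeftFInjective R) (a : R) :
    rAnn ((lAnn {a} : Submodule R R) : Set R) = Submodule.span Rᵐᵒᵖ {a} := by
  apply le_antisymm
  · intro b hb
    have hb' : ∀ t ∈ lAnn ({a} : Set R), t * b = 0 := hb
    have hx : ∀ x : ↥(Submodule.span R ({a} : Set R)), ∃ r, r * a = (x : R) := by
      intro x
      obtain ⟨r, hr⟩ := Submodule.mem_span_singleton.1 x.2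
      exact ⟨r, by simpa [smul_eq_mul] using hr⟩
    choose d hd using hx
    have key : ∀ (x : ↥(Submodule.span R ({a} : Set R))) (r : R), r * a = (x : R) →
        d x * b = r * b := by
      intro x r hr
      have h1 : d x - r ∈ lAnn ({a} : Set R) := by
        intro t ht
        rw [Set.mem_singleton_iff] at ht
        subst ht
        rw [sub_mul, hd x, hr, sub_self]
      have := hb' _ h1
      rw [sub_mul, sub_eq_zero] at this
      exact this
    let θ : ↥(Submodule.span R ({a} : Set R)) →ₗ[R] R :=
      { toFun := fun x => d x * b
        map_add' := by
          intro x y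
          show d (x + y) * b = d x * b + d y * b
          have := key (x + y) (d x + d y)
            (by rw [Submodule.coe_add, ← hd x, ← hd y, add_mul])
          rw [this, add_mul]
        map_smul' := by
          intro r x
          show d (r • x) * b = r • (d x * b)
          have := key (r • x) (r * d x)
            (by rw [Submodule.coe_smul, smul_eq_mul, ← hd x, mul_assoc])
          rw [this, smul_eq_mul, mul_assoc] }
    obtain ⟨g, hg⟩ := hF _ (Submodule.fg_span_singleton a) θ
    set c := g 1 with hc
    have hgx : ∀ x : R, g x = x * c := by
      intro x
      have := g.map_smul x 1
      simpa [smul_eq_mul] using this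
    have hamem : a ∈ Submodule.span R ({a} : Set R) := Submodule.mem_span_singleton_self a
    have h₁ := hg ⟨a, hamem⟩
    rw [hgx] at h₁
    have h₂ : θ ⟨a, hamem⟩ = 1 * b := key ⟨a, hamem⟩ 1 (one_mul a)
    rw [h₂, one_mul] at h₁
    rw [Submodule.mem_span_singleton]
    exact ⟨MulOpposite.op c, by show a * c = b; simpa using h₁⟩
  · intro x hx
    obtain ⟨m, hm⟩ := Submodule.mem_span_singleton.1 hx
    intro t ht
    have hta : t * a = 0 := ht a rfl
    rw [← hm, MulOpposite.smul_eq_mul_unop, ← mul_assoc, hta, zero_mul]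

/-- Backward direction: the key inductive predicate. -/
lemma cond_imp_FInj
    (h1 : ∀ T T₂ : Submodule R R, T.FG → T₂.FG →
          rAnn ((T ⊓ T₂ : Submodule R R) : Set R) = rAnn (T : Set R) ⊔ rAnn (T₂ : Set R))
    (h2 : ∀ a : R, rAnn ((lAnn {a} : Submodule R R) : Set R) = Submodule.span Rᵐᵒᵖ {a}) :
    LeftFInjective R := by
  have main : ∀ N : Submodule R R, N.FG →
      (N.FG ∧ ∀ f : N →ₗ[R] R, ∃ c, ∀ x : N, f x = (x : R) * c) := by
    intro N hN
    refine Submodule.fg_induction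
        (motive := fun N _ => N.FG ∧ ∀ f : N →ₗ[R] R, ∃ c, ∀ x : N, f x = (x : R) * c) ?_ ?_ N hN
    · intro a
      refine ⟨Submodule.fg_span_singleton a, ?_⟩
      intro f
      have hamem : a ∈ Submodule.span R ({a} : Set R) := Submodule.mem_span_singleton_self a
      set b := f ⟨a, hamem⟩ with hbdef
      have hb : b ∈ rAnn ((lAnn {a} : Submodule R R) : Set R) := by
        intro t ht
        have hta : t * a = 0 := ht a rfl
        have hz : t • (⟨a, hamem⟩ : ↥(Submodule.span R ({a} : Set R))) = 0 :=
          Subtype.ext (by simpa [smul_eq_mul] using hta)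
        calc t * b = f (t • ⟨a, hamem⟩) := by rw [f.map_smul, smul_eq_mul]
        _ = 0 := by rw [hz, f.map_zero]
      rw [h2 a, Submodule.mem_span_singleton] at hb
      obtain ⟨m, hm⟩ := hb
      refine ⟨m.unop, ?_⟩
      intro x
      obtain ⟨r, hr⟩ := Submodule.mem_span_singleton.1 x.2
      have hx : x = r • (⟨a, hamem⟩ : ↥(Submodule.span R ({a} : Set R))) :=
        Subtype.ext (by simpa using hr.symm)
      rw [hx, f.map_smul, smul_eq_mul, ← hbdef]
      rw [← hm, MulOpposite.smul_eq_mul_unop]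
      rw [Submodule.coe_smul, smul_eq_mul, mul_assoc]
    · rintro N₁ N₂ _ _ ⟨hfg₁, hP₁⟩ ⟨hfg₂, hP₂⟩
      refine ⟨hfg₁.sup hfg₂, ?_⟩
      intro f
      obtain ⟨c₁, hc₁⟩ := hP₁ (f ∘ₗ Submodule.inclusion le_sup_left)
      obtain ⟨c₂, hc₂⟩ := hP₂ (f ∘ₗ Submodule.inclusion le_sup_right)
      simp only [LinearMap.comp_apply] at hc₁ hc₂
      have hdiff : c₁ - c₂ ∈ rAnn ((N₁ ⊓ N₂ : Submodule R R) : Set R) := by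
        intro t ht
        have e₁ := hc₁ ⟨t, ht.1⟩
        have e₂ := hc₂ ⟨t, ht.2⟩
        have heq : (Submodule.inclusion (le_sup_left : N₁ ≤ N₁ ⊔ N₂)) ⟨t, ht.1⟩
            = (Submodule.inclusion (le_sup_right : N₂ ≤ N₁ ⊔ N₂)) ⟨t, ht.2⟩ :=
          Subtype.ext rfl
        rw [heq] at e₁
        rw [mul_sub, ← e₁, ← e₂, sub_self]
      rw [h1 N₁ N₂ hfg₁ hfg₂] at hdiff
      obtain ⟨u, hu, v, hv, huv⟩ := Submodule.mem_sup.1 hdiff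
      refine ⟨c₁ - u, ?_⟩
      intro x
      obtain ⟨x₁, hx₁, x₂, hx₂, hsum⟩ := Submodule.mem_sup.1 x.2
      have hxeq : x = Submodule.inclusion le_sup_left ⟨x₁, hx₁⟩
          + Submodule.inclusion le_sup_right ⟨x₂, hx₂⟩ :=
        Subtype.ext (by simpa using hsum.symm)
      have hx1u : x₁ * u = 0 := hu x₁ hx₁
      have hx2v : x₂ * v = 0 := hv x₂ hx₂
      have hv' : v = c₁ - c₂ - u := by rw [← huv]; abel
      have hcv : c₁ - u = c₂ + v := by rw [hv']; abel
      rw [hxeq, map_add, hc₁, hc₂]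
      simp only [Submodule.coe_add, Submodule.coe_inclusion]
      calc x₁ * c₁ + x₂ * c₂
          = x₁ * (c₁ - u) + x₂ * (c₂ + v) := by
            rw [mul_sub, mul_add, hx1u, hx2v, sub_zero, add_zero]
        _ = (x₁ + x₂) * (c₁ - u) := by rw [hcv, add_mul]
  intro I hI f
  obtain ⟨c, hc⟩ := (main I hI).2 f
  exact ⟨LinearMap.toSpanSingleton R R c, fun x => by
    rw [hc, LinearMap.toSpanSingleton_apply, smul_eq_mul]⟩

end Aux

/-- R is left F-injective iff the right-annihilator conditions hold: r(T ∩ T₂) = r(T) + r(T₂)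
for all finitely generated left ideals, and rl(a) = aR for all a. -/
theorem leftFInjective_iff_annihilator_conditions (R : Type*) [Ring R] :
    LeftFInjective R ↔
      ((∀ T T₂ : Submodule R R, T.FG → T₂.FG →
          rAnn ((T ⊓ T₂ : Submodule R R) : Set R) = rAnn (T : Set R) ⊔ rAnn (T₂ : Set R)) ∧
        ∀ a : R, rAnn ((lAnn {a} : Submodule R R) : Set R) = Submodule.span Rᵐᵒᵖ {a}) := by
  constructor
  · intro hF
    exact ⟨fun T T₂ hT hT₂ => FInj_cond1 hF T T₂ hT hT₂, fun a => FInj_cond2 hF a⟩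
  · rintro ⟨h1, h2⟩
    exact cond_imp_FInj h1 h2
end

section
/- If R is left F-injective and the left module R contains an infinite independent family of nonzero cyclic left ideals Ra₁, Ra₂, …, then the right annihilators r(a₁), r(a₂), … form an infinite coindependent family of proper right ideals of R. -/
private lemma extend_key {R : Type*} [Ring R]
    (hF : ∀ I : Submodule R R, I.FG → ∀ f : I →ₗ[R] R, ∃ g : R →ₗ[R] R, ∀ x : I, g x = f x)
    (T T' : Submodule R R) (hT : T.FG) (hT' : T'.FG) (hdis : Disjoint T T') :
    ∃ c : R, (∀ t ∈ T, t * c = t) ∧ ∀ t ∈ T', t * c = 0 := by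
  set I := T ⊔ T' with hI
  set p : Submodule R I := T.comap I.subtype with hp
  set q : Submodule R I := T'.comap I.subtype with hq
  have hcompl : IsCompl p q := by
    constructor
    · rw [disjoint_iff, eq_bot_iff]
      rintro ⟨x, hx⟩ ⟨h1, h2⟩
      have : x ∈ T ⊓ T' := ⟨h1, h2⟩
      rw [hdis.eq_bot] at this
      simpa [Submodule.mem_bot] using this
    · rw [codisjoint_iff, eq_top_iff]
      rintro ⟨x, hx⟩ -
      obtain ⟨t, ht, t', ht', rfl⟩ := Submodule.mem_sup.1 hx
      refine Submodule.mem_sup.2 ⟨⟨t, Submodule.mem_sup_left ht⟩, ht,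
        ⟨t', Submodule.mem_sup_right ht'⟩, ht', rfl⟩
  set φ : I →ₗ[R] R := I.subtype.comp ((p.subtype).comp (Submodule.projectionOnto p q hcompl))
  obtain ⟨g, hg⟩ := hF I (hT.sup hT') φ
  refine ⟨g 1, ?_, ?_⟩
  · intro t ht
    have hmem : t ∈ I := Submodule.mem_sup_left ht
    have h1 : g t = t * g 1 := by
      have := map_smul g t (1:R)
      simpa [smul_eq_mul] using this
    have h2 : g ((⟨t, hmem⟩ : I) : R) = φ ⟨t, hmem⟩ := hg _
    have h3 : φ ⟨t, hmem⟩ = t := by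
      have := Submodule.linearProjOfIsCompl_apply_left hcompl (⟨⟨t, hmem⟩, ht⟩ : p)
      simp [φ, this]
    rw [← h1]; exact h2.trans h3
  · intro t ht
    have hmem : t ∈ I := Submodule.mem_sup_right ht
    have h1 : g t = t * g 1 := by
      have := map_smul g t (1:R)
      simpa [smul_eq_mul] using this
    have h2 : g ((⟨t, hmem⟩ : I) : R) = φ ⟨t, hmem⟩ := hg _
    have h3 : φ ⟨t, hmem⟩ = 0 := by
      have := Submodule.projectionOnto_apply_of_mem_right (x := (⟨t, hmem⟩ : I)) hcompl ht
      simp [φ, this]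
    rw [← h1]; exact h2.trans h3



/-- If R is left F-injective and Ra₁, Ra₂, … is an infinite independent family of nonzero
cyclic left ideals, then r(a₁), r(a₂), … is an infinite coindependent family of proper
right ideals. -/
theorem coindependent_rAnn_of_leftFInjective {R : Type*} [Ring R]
    (hF : LeftFInjective R) (a : ℕ → R) (hne : ∀ i, a i ≠ 0)
    (hind : iSupIndep (fun i => Submodule.span R {a i})) :
    Coindependent (fun i => rAnn ({a i} : Set R)) ∧
      Function.Injective (fun i => rAnn ({a i} : Set R)) := by
  have memr : ∀ (b x : R), x ∈ rAnn ({b} : Set R) ↔ b * x = 0 := by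
    intro b x
    constructor
    · intro h; exact h b rfl
    · intro h t ht; rw [Set.mem_singleton_iff] at ht; subst ht; exact h
  have proper : ∀ i, rAnn ({a i} : Set R) ≠ ⊤ := by
    intro i h
    have : (1:R) ∈ rAnn ({a i} : Set R) := h ▸ Submodule.mem_top
    have := (memr (a i) 1).1 this
    rw [mul_one] at this
    exact hne i this
  have keysup : ∀ (i : ℕ) (s : Finset ℕ), i ∉ s →
      rAnn ({a i} : Set R) ⊔ (⨅ j ∈ s, rAnn ({a j} : Set R)) = ⊤ := by
    intro i s his
    set T := Submodule.span R {a i} with hT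
    set T' : Submodule R R := ⨆ j ∈ s, Submodule.span R {a j} with hT'
    have hTfg : T.FG := Submodule.fg_span_singleton _
    have hT'fg : T'.FG := Submodule.fg_biSup s _ (fun j _ => Submodule.fg_span_singleton _)
    have hdis : Disjoint T T' := by
      refine Disjoint.mono_right ?_ (hind i)
      refine iSup₂_le fun j hj => ?_
      exact le_iSup₂ (f := fun j (_ : j ≠ i) => Submodule.span R {a j}) j
        (fun h => his (h ▸ hj))
    obtain ⟨c, hc1, hc2⟩ := extend_key hF T T' hTfg hT'fg hdis
    have h1mem : (1:R) ∈ rAnn ({a i} : Set R) ⊔ (⨅ j ∈ s, rAnn ({a j} : Set R)) := by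
      have e1 : (1 - c) ∈ rAnn ({a i} : Set R) := by
        rw [memr]
        rw [mul_sub, mul_one, hc1 (a i) (Submodule.mem_span_singleton_self _), sub_self]
      have e2 : c ∈ ⨅ j ∈ s, rAnn ({a j} : Set R) := by
        refine Submodule.mem_iInf _ |>.2 fun j => Submodule.mem_iInf _ |>.2 fun hj => ?_
        rw [memr]
        refine hc2 (a j) ?_
        exact le_iSup₂ (f := fun j (_ : j ∈ s) => Submodule.span R {a j}) j hj
          (Submodule.mem_span_singleton_self _)
      have := Submodule.add_mem _ (Submodule.mem_sup_left e1) (Submodule.mem_sup_right e2)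
      simpa using this
    refine Submodule.eq_top_iff'.2 fun x => ?_
    have := Submodule.smul_mem _ (MulOpposite.op x) h1mem
    simpa [MulOpposite.smul_eq_mul_unop] using this
  refine ⟨⟨proper, keysup⟩, ?_⟩
  intro i j h
  by_contra hij
  simp only at h
  have hi : i ∉ ({j} : Finset ℕ) := by simp [hij]
  have := keysup i {j} hi
  simp only [Finset.mem_singleton, iInf_iInf_eq_left] at this
  rw [← h, sup_idem] at this
  exact proper i this
end
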